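/- Let X and Y be standard Borel spaces and let Q be a probability measure on X × Y with disintegration Q = Q_X ⊗ κ_Q, where Q_X is the first marginal and κ_Q is a Markov kernel from X to Y. Let μ be a probability measure on X. Then among all probability measures Π on X × Y whose first marginal equals μ, the divergence KL(Π ‖ Q) is minimised by Π* = μ ⊗ κ_Q, with minimal value KL(Π* ‖ Q) = KL(μ ‖ Q_X), and Π* is the unique minimiser whenever KL(μ ‖ Q_X) < ∞. Consequently, for any set C of probability measures on X, inf{ KL(Π ‖ Q) : Π a probability on X × Y with first marginal in C } = inf{ KL(π ‖ Q_X) : π ∈ C }. -/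

import Mathlib

open MeasureTheory ProbabilityTheory Classical

open scoped ENNReal

/-- Kullback-Leibler divergence between two measures, valued in `[0, ∞]`:
`KL(μ‖ν) = ∫ log(dμ/dν) dμ` when `μ ≪ ν` and the log-likelihood ratio is `μ`-integrable,
and `+∞` otherwise. -/
noncomputable def KL {α : Type*} [MeasurableSpace α] (μ ν : Measure α) : ℝ≥0∞ :=
  if μ ≪ ν ∧ Integrable (llr μ ν) μ then ENNReal.ofReal (∫ x, llr μ ν x ∂μ) else ∞

/-!
Disintegrating `P = P.fst ⊗ₘ P.condKernel`, the chain rule gives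
`KL(P ‖ ν ⊗ₘ κ) = KL(P.fst ‖ ν) + KL(P ‖ P.fst ⊗ₘ κ)`. The second term is nonnegative and, by
Gibbs' inequality, vanishes only when `P = P.fst ⊗ₘ κ`; for `P = μ ⊗ₘ κ` it is zero.
-/

open InformationTheory

/-- Mathlib's `klDiv` adds the correction `ν univ - μ univ`, which vanishes for equal masses. -/
lemma KL_eq_klDiv {α : Type*} [MeasurableSpace α] {μ ν : Measure α}
    (h : μ Set.univ = ν Set.univ) : KL μ ν = klDiv μ ν := by
  by_cases hμν : μ ≪ ν ∧ Integrable (llr μ ν) μ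
  · rw [KL, if_pos hμν, klDiv_of_ac_of_integrable hμν.1 hμν.2, measureReal_def,
      measureReal_def, h, add_sub_cancel_right]
  · rw [KL, if_neg hμν, eq_comm, klDiv_eq_top_iff]
    exact fun hac hint => hμν ⟨hac, hint⟩

lemma klDiv_eq_klDiv_fst_add {X Y : Type*} [MeasurableSpace X] [MeasurableSpace Y]
    [StandardBorelSpace Y] [Nonempty Y] (P : Measure (X × Y)) [IsFiniteMeasure P]
    (ν : Measure X) [IsFiniteMeasure ν] (κ : Kernel X Y) [IsMarkovKernel κ] :
    klDiv P (ν ⊗ₘ κ) = klDiv P.fst ν + klDiv P (P.fst ⊗ₘ κ) := by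
  simpa only [P.disintegrate P.condKernel] using klDiv_compProd_eq_add P.fst ν P.condKernel κ

section CompProd

variable {X Y : Type*} [MeasurableSpace X] [MeasurableSpace Y]
  {ν : Measure X} [IsProbabilityMeasure ν] {κ : Kernel X Y} [IsMarkovKernel κ]

lemma KL_compProd_left (μ : Measure X) [IsProbabilityMeasure μ] :
    KL (μ ⊗ₘ κ) (ν ⊗ₘ κ) = KL μ ν := by
  rw [KL_eq_klDiv (by simp), KL_eq_klDiv (by simp), klDiv_compProd_left]

lemma KL_fst_le (P : Measure (X × Y)) [IsProbabilityMeasure P] :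
    KL P.fst ν ≤ KL P (ν ⊗ₘ κ) := by
  rw [KL_eq_klDiv (by simp), KL_eq_klDiv (by simp)]
  have h := klDiv_map_le P (ν ⊗ₘ κ) measurable_fst
  rwa [← Measure.fst, ← Measure.fst, Measure.fst_compProd] at h

lemma eq_fst_compProd_of_KL_eq [StandardBorelSpace Y] (P : Measure (X × Y))
    [IsProbabilityMeasure P] (hP : KL P (ν ⊗ₘ κ) = KL P.fst ν) (hfin : KL P.fst ν ≠ ∞) :
    P = P.fst ⊗ₘ κ := by
  have : Nonempty Y := (nonempty_of_isProbabilityMeasure P).map Prod.snd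
  rw [KL_eq_klDiv (by simp)] at hfin
  rw [KL_eq_klDiv (by simp), KL_eq_klDiv (by simp), klDiv_eq_klDiv_fst_add,
    ← add_zero (klDiv P.fst ν), add_assoc, zero_add, ENNReal.add_right_inj hfin] at hP
  exact klDiv_eq_zero_iff.mp hP

end CompProd

theorem kl_min_given_first_marginal_general
    {X Y : Type*} [MeasurableSpace X] [MeasurableSpace Y]
    [StandardBorelSpace Y]
    (Q : Measure (X × Y)) [IsProbabilityMeasure Q]
    (κQ : Kernel X Y) [IsMarkovKernel κQ]
    (hQ : Q = Q.fst ⊗ₘ κQ)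
    (μ : Measure X) [IsProbabilityMeasure μ] :
    (∀ P : Measure (X × Y), IsProbabilityMeasure P → P.fst = μ →
        KL (μ ⊗ₘ κQ) Q ≤ KL P Q) ∧
    KL (μ ⊗ₘ κQ) Q = KL μ Q.fst ∧
    (KL μ Q.fst < ∞ → ∀ P : Measure (X × Y), IsProbabilityMeasure P → P.fst = μ →
        KL P Q = KL μ Q.fst → P = μ ⊗ₘ κQ) ∧
    (∀ C : Set (Measure X), (∀ π ∈ C, IsProbabilityMeasure π) →
      (⨅ (P : Measure (X × Y)) (_ : IsProbabilityMeasure P) (_ : P.fst ∈ C), KL P Q) =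
        ⨅ (π : Measure X) (_ : π ∈ C), KL π Q.fst) := by
  generalize hν : Q.fst = ν at hQ ⊢
  subst hQ
  have : IsProbabilityMeasure ν := hν ▸ inferInstance
  refine ⟨fun P _ hP => ?_, KL_compProd_left μ, fun hfin P _ hP hPQ => ?_, fun C hC => ?_⟩
  · rw [KL_compProd_left, ← hP]
    exact KL_fst_le P
  · subst hP
    exact eq_fst_compProd_of_KL_eq P hPQ hfin.ne
  · refine le_antisymm (le_iInf₂ fun π hπ => ?_) (le_iInf₂ fun P _ => le_iInf fun hP => ?_)
    · have := hC π hπ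
      rw [← KL_compProd_left (κ := κQ) π]
      refine iInf_le_of_le (π ⊗ₘ κQ) (iInf₂_le ?_ ?_)
      · infer_instance
      · rwa [Measure.fst_compProd]
    · exact (iInf₂_le P.fst hP).trans (KL_fst_le P)

/-- Among all probability measures `P` on `X × Y` with first marginal `μ`, the divergence
`KL(P ‖ Q)` (for `Q = Q.fst ⊗ₘ κQ`) is minimised by `P* = μ ⊗ₘ κQ`, with minimal value
`KL(μ ‖ Q.fst)`; the minimiser is unique whenever `KL(μ ‖ Q.fst) < ∞`.  Consequently the
infimum of `KL(· ‖ Q)` over probability measures whose first marginal lies in a set `C`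
equals the infimum of `KL(· ‖ Q.fst)` over `C`. -/
theorem kl_min_given_first_marginal
    {X Y : Type*} [MeasurableSpace X] [MeasurableSpace Y]
    [StandardBorelSpace X] [StandardBorelSpace Y]
    (Q : Measure (X × Y)) [IsProbabilityMeasure Q]
    (κQ : Kernel X Y) [IsMarkovKernel κQ]
    (hQ : Q = Q.fst ⊗ₘ κQ)
    (μ : Measure X) [IsProbabilityMeasure μ] :
    (∀ P : Measure (X × Y), IsProbabilityMeasure P → P.fst = μ →
        KL (μ ⊗ₘ κQ) Q ≤ KL P Q) ∧
    KL (μ ⊗ₘ κQ) Q = KL μ Q.fst ∧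
    (KL μ Q.fst < ∞ → ∀ P : Measure (X × Y), IsProbabilityMeasure P → P.fst = μ →
        KL P Q = KL μ Q.fst → P = μ ⊗ₘ κQ) ∧
    (∀ C : Set (Measure X), (∀ π ∈ C, IsProbabilityMeasure π) →
      (⨅ (P : Measure (X × Y)) (_ : IsProbabilityMeasure P) (_ : P.fst ∈ C), KL P Q) =
        ⨅ (π : Measure X) (_ : π ∈ C), KL π Q.fst) :=
  kl_min_given_first_marginal_general Q κQ hQ μ
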